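/- Let Λ be a commutative ring, let A = Λ[X_s : s ∈ S] be a polynomial Λ-algebra on a set S of variables, let ε : A → Λ be a Λ-algebra homomorphism, and let I = ker ε. Then for every q ≥ 0 the canonical Λ-module homomorphism Sym^q_Λ(I/I²) → I^q/I^{q+1}, induced by multiplication in A, is an isomorphism. -/

import Mathlib

open scoped TensorProduct
open PiTensorProduct

noncomputable section

/-- The `q`-th symmetric power of a `Λ`-module `V`: the quotient of the `q`-fold tensor
power by the relations identifying a pure tensor with all its permutations. -/
def SymPow (Λ : Type*) [CommRing Λ] (V : Type*) [AddCommGroup V] [Module Λ V] (q : ℕ) :=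
  (⨂[Λ] _ : Fin q, V) ⧸ (Submodule.span Λ
    {x : ⨂[Λ] _ : Fin q, V | ∃ (v : Fin q → V) (σ : Equiv.Perm (Fin q)),
      x = (⨂ₜ[Λ] i, v i) - ⨂ₜ[Λ] i, v (σ i)})

instance (Λ : Type*) [CommRing Λ] (V : Type*) [AddCommGroup V] [Module Λ V] (q : ℕ) :
    AddCommGroup (SymPow Λ V q) := by delta SymPow; infer_instance

instance (Λ : Type*) [CommRing Λ] (V : Type*) [AddCommGroup V] [Module Λ V] (q : ℕ) :
    Module Λ (SymPow Λ V q) := by delta SymPow; infer_instance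

/-- The class of the symmetrized product `v 0 ⋯ v (q-1)` in the symmetric power. -/
def SymPow.mk (Λ : Type*) [CommRing Λ] (V : Type*) [AddCommGroup V] [Module Λ V] (q : ℕ)
    (v : Fin q → V) : SymPow Λ V q :=
  Submodule.Quotient.mk (⨂ₜ[Λ] i, v i)



noncomputable section
namespace Statement6Aux

open MvPolynomial Finset

theorem exists_comp_perm {α : Type*} : ∀ {n : ℕ} (f g : Fin n → α),
    Multiset.map f Finset.univ.val = Multiset.map g Finset.univ.val →
    ∃ σ : Equiv.Perm (Fin n), f = g ∘ σ := by
  intro n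
  induction n with
  | zero => exact fun f g _ => ⟨Equiv.refl _, funext fun i => i.elim0⟩
  | succ n ih =>
    intro f g h
    have hf0 : f 0 ∈ Multiset.map g Finset.univ.val := by
      rw [← h]
      exact Multiset.mem_map_of_mem _ (Finset.mem_univ (0 : Fin (n+1)))
    rw [Multiset.mem_map] at hf0
    obtain ⟨j, -, hj⟩ := hf0
    have hu1 : Multiset.map f (Finset.univ.val : Multiset (Fin (n+1)))
        = f 0 ::ₘ Multiset.map (f ∘ Fin.succ) Finset.univ.val := by
      rw [Fin.univ_succ]
      simp only [Finset.cons_val, Multiset.map_cons, Finset.map_val, Multiset.map_map,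
        Function.comp_def, Function.Embedding.coeFn_mk]
    have hu2 : Multiset.map g (Finset.univ.val : Multiset (Fin (n+1)))
        = g j ::ₘ Multiset.map (g ∘ j.succAbove) Finset.univ.val := by
      rw [Fin.univ_succAbove n j]
      simp only [Finset.cons_val, Multiset.map_cons, Finset.map_val, Multiset.map_map,
        Function.comp_def, Fin.succAboveEmb_apply]
    rw [hu1, hu2, ← hj] at h
    have h' := (Multiset.cons_inj_right _).mp h
    obtain ⟨σ', hσ'⟩ := ih (f ∘ Fin.succ) (g ∘ j.succAbove) h'
    refine ⟨(finSuccEquiv n).trans ((Equiv.optionCongr σ').trans (finSuccEquiv' j).symm), ?_⟩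
    funext i
    refine Fin.cases ?_ (fun k => ?_) i
    · simp only [Function.comp_apply, Equiv.trans_apply, finSuccEquiv_zero,
        Equiv.optionCongr_apply, Option.map_none, finSuccEquiv'_symm_none]
      exact hj.symm
    · simp only [Function.comp_apply, Equiv.trans_apply, finSuccEquiv_succ,
        Equiv.optionCongr_apply, Option.map_some, finSuccEquiv'_symm_some]
      exact congrFun hσ' k

theorem prod_mem_pow {R : Type*} [CommRing R] (J : Ideal R) {ι : Type*} [DecidableEq ι]
    (t : Finset ι) (x : ι → R) (n : ι → ℕ) (h : ∀ i ∈ t, x i ∈ J ^ n i) :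
    ∏ i ∈ t, x i ∈ J ^ (∑ i ∈ t, n i) := by
  induction t using Finset.induction with
  | empty => simp
  | @insert a t ha ih =>
    rw [Finset.prod_insert ha, Finset.sum_insert ha, pow_add]
    exact Ideal.mul_mem_mul (h a (Finset.mem_insert_self a t))
      (ih fun i hi => h i (Finset.mem_insert_of_mem hi))

theorem prod_sub_prod_mem {R : Type*} [CommRing R] (J : Ideal R) {ι : Type*} [DecidableEq ι]
    (t : Finset ι) (x y : ι → R) (hx : ∀ i ∈ t, x i ∈ J) (hy : ∀ i ∈ t, y i ∈ J)
    (hxy : ∀ i ∈ t, x i - y i ∈ J ^ 2) :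
    ∏ i ∈ t, x i - ∏ i ∈ t, y i ∈ J ^ (t.card + 1) := by
  induction t using Finset.induction with
  | empty => simp
  | @insert a t ha ih =>
    rw [Finset.prod_insert ha, Finset.prod_insert ha, Finset.card_insert_of_notMem ha]
    have key : x a * ∏ i ∈ t, x i - y a * ∏ i ∈ t, y i
        = x a * (∏ i ∈ t, x i - ∏ i ∈ t, y i) + (x a - y a) * ∏ i ∈ t, y i := by ring
    rw [key]
    have h1 : x a * (∏ i ∈ t, x i - ∏ i ∈ t, y i) ∈ J ^ (t.card + 1 + 1) := by
      rw [pow_succ']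
      exact Ideal.mul_mem_mul (hx a (Finset.mem_insert_self a t))
        (ih (fun i hi => hx i (Finset.mem_insert_of_mem hi))
            (fun i hi => hy i (Finset.mem_insert_of_mem hi))
            (fun i hi => hxy i (Finset.mem_insert_of_mem hi)))
    have h2 : (x a - y a) * ∏ i ∈ t, y i ∈ J ^ (t.card + 1 + 1) := by
      have hprod : ∏ i ∈ t, y i ∈ J ^ t.card := by
        have := prod_mem_pow J t y (fun _ => 1) (by
          intro i hi; simpa using hy i (Finset.mem_insert_of_mem hi))
        simpa using this
      have : (x a - y a) * ∏ i ∈ t, y i ∈ J ^ (2 + t.card) :=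
        (pow_add J 2 t.card) ▸ Ideal.mul_mem_mul (hxy a (Finset.mem_insert_self a t)) hprod
      convert this using 2
      omega
    exact Ideal.add_mem _ h1 h2

theorem mul_mem_of_span {R A : Type*} [CommSemiring R] [CommSemiring A] [Algebra R A]
    {sa sb : Set A} {p : Submodule R A} {a b : A}
    (ha : a ∈ Submodule.span R sa) (hb : b ∈ Submodule.span R sb)
    (h : ∀ x ∈ sa, ∀ y ∈ sb, x * y ∈ p) : a * b ∈ p := by
  induction ha using Submodule.span_induction with
  | mem x hx =>
    induction hb using Submodule.span_induction with
    | mem y hy => exact h x hx y hy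
    | zero => rw [mul_zero]; exact p.zero_mem
    | add y z _ _ hy hz => rw [mul_add]; exact p.add_mem hy hz
    | smul r y _ hy => rw [mul_smul_comm]; exact p.smul_mem r hy
  | zero => rw [zero_mul]; exact p.zero_mem
  | add x y _ _ hx hy => rw [add_mul]; exact p.add_mem hx hy
  | smul r x _ hx => rw [smul_mul_assoc]; exact p.smul_mem r hx

end Statement6Aux
section Chunk2
namespace Statement6Aux

open MvPolynomial Finset
open scoped Classical

variable {Λ : Type*} [CommRing Λ] {S : Type*} (ε : MvPolynomial S Λ →ₐ[Λ] Λ)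

/-- the translated variables -/
def P (s : S) : MvPolynomial S Λ := X s - C (ε (X s))

abbrev Iε : Ideal (MvPolynomial S Λ) := RingHom.ker (ε : MvPolynomial S Λ →+* Λ)

theorem hPmem (s : S) : P ε s ∈ Iε ε := by
  simp [P, RingHom.mem_ker, map_sub, ← MvPolynomial.algebraMap_eq, AlgHom.commutes]

/-- the translation automorphism -/
def ρ : MvPolynomial S Λ ≃ₐ[Λ] MvPolynomial S Λ :=
  AlgEquiv.ofAlgHom (aeval fun s => X s - C (ε (X s))) (aeval fun s => X s + C (ε (X s)))
    (by ext s : 1; simp [← MvPolynomial.algebraMap_eq]) 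
    (by ext s : 1; simp [← MvPolynomial.algebraMap_eq])

theorem hρX (s : S) : ρ ε (X s) = P ε s := by
  simp [ρ, P, AlgEquiv.ofAlgHom, aeval_X]

/-- basis given by products of the `P s` -/
def bP : Module.Basis (S →₀ ℕ) Λ (MvPolynomial S Λ) :=
  (MvPolynomial.basisMonomials S Λ).map (ρ ε).toLinearEquiv

theorem hbP (m : S →₀ ℕ) : bP ε m = ρ ε (monomial m 1) := by
  simp [bP, Module.Basis.map_apply]

theorem hbP_prod (m : S →₀ ℕ) : bP ε m = m.prod fun s n => P ε s ^ n := by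
  rw [hbP, monomial_eq, C_1, one_mul, map_finsuppProd]
  simp [map_pow, hρX]

/-- degree of an exponent multi-index -/
def deg (m : S →₀ ℕ) : ℕ := Multiset.card m.toMultiset

theorem deg_add (m m' : S →₀ ℕ) : deg (m + m') = deg m + deg m' := by
  simp [deg, Finsupp.toMultiset_add]

theorem deg_single (s : S) : deg (Finsupp.single s 1) = 1 := by
  simp [deg]

theorem deg_eq_zero {m : S →₀ ℕ} : deg m = 0 ↔ m = 0 := by
  classical
  constructor
  · intro h
    have h2 : m.toMultiset = 0 := Multiset.card_eq_zero.mp h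
    have := congrArg Multiset.toFinsupp h2
    simpa [Finsupp.toMultiset_toFinsupp] using this
  · rintro rfl; simp [deg]

theorem deg_sum_support (m : S →₀ ℕ) : deg m = ∑ s ∈ m.support, m s := by
  simp [deg, Finsupp.card_toMultiset, Finsupp.sum]

theorem hbP_mem (m : S →₀ ℕ) {q : ℕ} (h : q ≤ deg m) : bP ε m ∈ Iε ε ^ q := by
  classical
  refine Ideal.pow_le_pow_right h ?_
  rw [hbP_prod, deg_sum_support, Finsupp.prod]
  exact prod_mem_pow _ _ _ _ fun s _ => Ideal.pow_mem_pow (hPmem ε s) (m s)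

theorem hbP_mul (m m' : S →₀ ℕ) : bP ε m * bP ε m' = bP ε (m + m') := by
  rw [hbP, hbP, hbP, ← _root_.map_mul, monomial_mul, one_mul]

theorem hbP_zero : bP ε 0 = 1 := by rw [hbP]; simp

theorem hεbP (m : S →₀ ℕ) : ε (bP ε m) = if m = 0 then 1 else 0 := by
  by_cases hm : m = 0
  · subst hm; rw [hbP_zero]; simp
  · have h1 : 1 ≤ deg m := Nat.one_le_iff_ne_zero.mpr (fun h => hm (deg_eq_zero.mp h))
    have h2 : bP ε m ∈ Iε ε := by simpa using hbP_mem ε m h1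
    rw [RingHom.mem_ker] at h2
    simp only [hm, if_false]
    simpa using h2

theorem hε_repr (x : MvPolynomial S Λ) : ε x = (bP ε).repr x 0 := by
  classical
  have key : ε.toLinearMap
      = (Finsupp.lapply (0 : S →₀ ℕ)).comp ((bP ε).repr : MvPolynomial S Λ →ₗ[Λ] _) := by
    refine Module.Basis.ext (bP ε) fun m => ?_
    simp [hεbP, Module.Basis.repr_self, Finsupp.lapply_apply, Finsupp.single_apply]
  exact DFunLike.congr_fun key x

theorem mem_span_one {x : MvPolynomial S Λ} (hx : x ∈ Iε ε) :
    x ∈ Submodule.span Λ (bP ε '' {m | 1 ≤ deg m}) := by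
  rw [Module.Basis.mem_span_image]
  intro m hm
  rcases Nat.eq_zero_or_pos (deg m) with h | h
  · exfalso
    rw [deg_eq_zero] at h
    subst h
    rw [Finset.mem_coe, Finsupp.mem_support_iff, ← hε_repr] at hm
    exact hm (RingHom.mem_ker.mp hx)
  · exact h

theorem hspan (q : ℕ) :
    Submodule.restrictScalars Λ (Iε ε ^ q)
      = Submodule.span Λ (bP ε '' {m | q ≤ deg m}) := by
  induction q with
  | zero =>
    have h2 : {m : S →₀ ℕ | 0 ≤ deg m} = Set.univ := by ext; simp
    rw [h2, Set.image_univ, Module.Basis.span_eq, pow_zero, Ideal.one_eq_top]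
    ext x
    simp
  | succ q ih =>
    apply le_antisymm
    · intro x hx
      have hx' : x ∈ Iε ε ^ q * Iε ε := by
        have : x ∈ Iε ε ^ (q + 1) := hx
        rwa [pow_succ] at this
      refine Submodule.mul_induction_on hx' ?_ fun a b ha hb => Submodule.add_mem _ ha hb
      intro a ha b hb
      have ha' : a ∈ Submodule.span Λ (bP ε '' {m | q ≤ deg m}) := by
        rw [← ih]; exact ha
      have hb' : b ∈ Submodule.span Λ (bP ε '' {m | 1 ≤ deg m}) := mem_span_one ε hb
      refine mul_mem_of_span ha' hb' ?_
      rintro _ ⟨m, hm, rfl⟩ _ ⟨m', hm', rfl⟩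
      rw [hbP_mul]
      refine Submodule.subset_span ⟨m + m', ?_, rfl⟩
      have := deg_add m m'
      simp only [Set.mem_setOf_eq] at hm hm' ⊢
      omega
    · rw [Submodule.span_le]
      rintro _ ⟨m, hm, rfl⟩
      exact hbP_mem ε m hm

end Statement6Aux
end Chunk2
section Chunk3
namespace Statement6Aux

open MvPolynomial Finset

variable {Λ : Type*} [CommRing Λ] {S : Type*} (ε : MvPolynomial S Λ →ₐ[Λ] Λ)

theorem hP_bP (s : S) : P ε s = bP ε (Finsupp.single s 1) := by
  rw [hbP, ← X_pow_eq_monomial, pow_one, hρX]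

def cfun (s : S) : (Iε ε).Cotangent := (Iε ε).toCotangent ⟨P ε s, hPmem ε s⟩

/-- `toCotangent` as a `Λ`-linear map -/
def tcL : ↥(Iε ε) →ₗ[Λ] (Iε ε).Cotangent := (Iε ε).toCotangent.restrictScalars Λ

theorem span_le_I : Submodule.span Λ (bP ε '' {m | 1 ≤ deg m})
    ≤ Submodule.restrictScalars Λ (Iε ε) := by
  rw [← hspan]
  intro x hx
  have hx' : x ∈ Iε ε ^ 1 := hx
  rwa [pow_one] at hx'

theorem hc_li : LinearIndependent Λ (cfun ε) := by
  classical
  rw [linearIndependent_iff']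
  intro t g hg s hs
  set w : ↥(Iε ε) := ∑ i ∈ t, g i • (⟨P ε i, hPmem ε i⟩ : ↥(Iε ε)) with hw
  have h1 : tcL ε w = 0 := by
    rw [hw, map_sum]
    simp only [map_smul]
    simpa [tcL, cfun] using hg
  have h2 : (w : MvPolynomial S Λ) ∈ Iε ε ^ 2 :=
    ((Iε ε).toCotangent_eq_zero w).mp h1
  have h3 : (w : MvPolynomial S Λ) = ∑ i ∈ t, g i • P ε i := by
    rw [hw]
    simp
  have h4 : (w : MvPolynomial S Λ) ∈ Submodule.span Λ (bP ε '' {m | 2 ≤ deg m}) := by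
    rw [← hspan]; exact h2
  rw [Module.Basis.mem_span_image] at h4
  have h5 : (bP ε).repr w (Finsupp.single s 1) = g s := by
    rw [h3, map_sum]
    rw [Finsupp.finset_sum_apply]
    have hterm : ∀ i ∈ t, ((bP ε).repr (g i • P ε i)) (Finsupp.single s 1)
        = if i = s then g i else 0 := by
      intro i _
      rw [map_smul, hP_bP, Module.Basis.repr_self]
      rw [Finsupp.smul_apply, Finsupp.single_apply]
      by_cases h : i = s
      · subst h; simp
      · have : ¬(Finsupp.single i 1 = Finsupp.single s 1) := by
          intro hc
          exact h ((Finsupp.single_left_inj (one_ne_zero)).mp hc)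
        simp [this, h]
    rw [Finset.sum_congr rfl hterm]
    rw [Finset.sum_ite_eq' t s g]
    simp [hs]
  have h6 : (bP ε).repr w (Finsupp.single s 1) = 0 := by
    by_contra h
    have hmem : Finsupp.single s 1 ∈ ((bP ε).repr w).support := Finsupp.mem_support_iff.mpr h
    have := h4 hmem
    simp only [Set.mem_setOf_eq, deg_single] at this
    omega
  rw [h5] at h6
  exact h6

theorem hc_top : ⊤ ≤ Submodule.span Λ (Set.range (cfun ε)) := by
  rintro x -
  obtain ⟨y, rfl⟩ := (Iε ε).toCotangent_surjective x
  have hy : (y : MvPolynomial S Λ) ∈ Submodule.span Λ (bP ε '' {m | 1 ≤ deg m}) :=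
    mem_span_one ε y.2
  have main : ∀ z (hz : z ∈ Submodule.span Λ (bP ε '' {m | 1 ≤ deg m})),
      ∀ h : z ∈ Iε ε, (Iε ε).toCotangent ⟨z, h⟩ ∈ Submodule.span Λ (Set.range (cfun ε)) := by
    intro z hz
    induction hz using Submodule.span_induction with
    | mem a ha =>
      obtain ⟨m, hm, rfl⟩ := ha
      intro h
      have hm' : 1 ≤ deg m := hm
      rcases eq_or_lt_of_le hm' with h1 | h1
      · obtain ⟨s, rfl⟩ : ∃ s, m = Finsupp.single s 1 := by
          classical
          have hcard : Multiset.card m.toMultiset = 1 := h1.symm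
          obtain ⟨a, ha⟩ := Multiset.card_eq_one.mp hcard
          refine ⟨a, ?_⟩
          have h2 := congrArg Multiset.toFinsupp ha
          rw [Finsupp.toMultiset_toFinsupp] at h2
          rw [h2]
          simp [Multiset.toFinsupp_singleton]
        have heq : (⟨bP ε (Finsupp.single s 1), h⟩ : ↥(Iε ε)) = ⟨P ε s, hPmem ε s⟩ :=
          Subtype.ext (hP_bP ε s).symm
        rw [heq]
        exact Submodule.subset_span ⟨s, rfl⟩
      · have h2 : bP ε m ∈ Iε ε ^ 2 := hbP_mem ε m h1
        have h3 : (Iε ε).toCotangent ⟨bP ε m, h⟩ = 0 := ((Iε ε).toCotangent_eq_zero _).mpr h2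
        rw [h3]
        exact Submodule.zero_mem _
    | zero =>
      intro h
      have : (⟨(0 : MvPolynomial S Λ), h⟩ : ↥(Iε ε)) = 0 := rfl
      rw [this, map_zero]
      exact Submodule.zero_mem _
    | add a b ha hb iha ihb =>
      intro h
      have haI : a ∈ Iε ε := span_le_I ε ha
      have hbI : b ∈ Iε ε := span_le_I ε hb
      have heq : (⟨a + b, h⟩ : ↥(Iε ε)) = ⟨a, haI⟩ + ⟨b, hbI⟩ := rfl
      rw [heq, map_add]
      exact Submodule.add_mem _ (iha haI) (ihb hbI)
    | smul r a ha iha =>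
      intro h
      have haI : a ∈ Iε ε := span_le_I ε ha
      have heq : (⟨r • a, h⟩ : ↥(Iε ε)) = r • (⟨a, haI⟩ : ↥(Iε ε)) := rfl
      rw [heq]
      rw [show (Iε ε).toCotangent (r • (⟨a, haI⟩ : ↥(Iε ε))) = r • (Iε ε).toCotangent ⟨a, haI⟩
        from map_smul (tcL ε) r _]
      exact Submodule.smul_mem _ _ (iha haI)
  have := main y.1 hy y.2
  rwa [Subtype.coe_eta] at this

/-- basis of the cotangent module -/
def bC : Module.Basis S Λ (Iε ε).Cotangent := Module.Basis.mk (hc_li ε) (hc_top ε)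

theorem hbC (s : S) : bC ε s = cfun ε s := Module.Basis.mk_apply _ _ _

def jm : (Iε ε).Cotangent →ₗ[Λ] ↥(Submodule.restrictScalars Λ (Iε ε)) :=
  (bC ε).constr Λ fun s => ⟨P ε s, hPmem ε s⟩

def iota : (Iε ε).Cotangent →ₗ[Λ] MvPolynomial S Λ :=
  (Submodule.restrictScalars Λ (Iε ε)).subtype ∘ₗ jm ε

theorem hiota_basis (s : S) : iota ε (bC ε s) = P ε s := by
  simp [iota, jm, Module.Basis.constr_basis]

theorem hiota_mem (x : (Iε ε).Cotangent) : iota ε x ∈ Iε ε := (jm ε x).2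

/-- toCotangent from the restricted-scalars ideal -/
def tcrs : ↥(Submodule.restrictScalars Λ (Iε ε)) →ₗ[Λ] (Iε ε).Cotangent where
  toFun x := (Iε ε).toCotangent ⟨x.1, x.2⟩
  map_add' x y := map_add (Iε ε).toCotangent ⟨x.1, x.2⟩ ⟨y.1, y.2⟩
  map_smul' r x := map_smul (tcL ε) r ⟨x.1, x.2⟩

theorem hcomp (x : (Iε ε).Cotangent) :
    (Iε ε).toCotangent ⟨iota ε x, hiota_mem ε x⟩ = x := by
  have key : (tcrs ε).comp (jm ε) = LinearMap.id := by
    refine Module.Basis.ext (bC ε) fun s => ?_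
    simp only [LinearMap.comp_apply, LinearMap.id_apply, jm, Module.Basis.constr_basis]
    show (Iε ε).toCotangent ⟨P ε s, hPmem ε s⟩ = bC ε s
    rw [hbC]
    rfl
  have := DFunLike.congr_fun key x
  exact this

theorem hiota_sub (w : ↥(Iε ε)) :
    (w : MvPolynomial S Λ) - iota ε ((Iε ε).toCotangent w) ∈ Iε ε ^ 2 := by
  have h1 : (Iε ε).toCotangent ⟨iota ε ((Iε ε).toCotangent w), hiota_mem ε _⟩
      = (Iε ε).toCotangent w := hcomp ε _
  have h2 := ((Iε ε).toCotangent_eq).mp h1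
  have h3 := (Iε ε ^ 2).neg_mem h2
  simpa using h3

end Statement6Aux
end Chunk3
section Chunk4
namespace Statement6Aux

open MvPolynomial Finset PiTensorProduct
open scoped TensorProduct

variable {Λ : Type*} [CommRing Λ] {S : Type*} (ε : MvPolynomial S Λ →ₐ[Λ] Λ) (q : ℕ)

theorem toMultiset_inj {m m' : S →₀ ℕ} (h : m.toMultiset = m'.toMultiset) : m = m' := by
  classical
  have h2 := congrArg Multiset.toFinsupp h
  simpa [Finsupp.toMultiset_toFinsupp] using h2

/-- the relation submodule defining `SymPow` -/
def symRel (V : Type*) [AddCommGroup V] [Module Λ V] (q : ℕ) :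
    Submodule Λ (⨂[Λ] _ : Fin q, V) :=
  Submodule.span Λ
    {x : ⨂[Λ] _ : Fin q, V | ∃ (v : Fin q → V) (σ : Equiv.Perm (Fin q)),
      x = (⨂ₜ[Λ] i, v i) - ⨂ₜ[Λ] i, v (σ i)}

theorem mk_comp_perm {V : Type*} [AddCommGroup V] [Module Λ V] {q : ℕ}
    (v : Fin q → V) (σ : Equiv.Perm (Fin q)) :
    SymPow.mk Λ V q (v ∘ σ) = SymPow.mk Λ V q v := by
  symm
  exact (Submodule.Quotient.eq _).mpr (Submodule.subset_span ⟨v, σ, rfl⟩)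

def F0 : (⨂[Λ] _ : Fin q, (Iε ε).Cotangent) →ₗ[Λ] MvPolynomial S Λ :=
  PiTensorProduct.lift
    ((MultilinearMap.mkPiAlgebra Λ (Fin q) (MvPolynomial S Λ)).compLinearMap fun _ => iota ε)

theorem hF0_tprod (v : Fin q → (Iε ε).Cotangent) :
    F0 ε q (⨂ₜ[Λ] i, v i) = ∏ i, iota ε (v i) := by
  simp [F0]

def F : SymPow Λ (Iε ε).Cotangent q →ₗ[Λ] MvPolynomial S Λ :=
  Submodule.liftQ (symRel (Iε ε).Cotangent q) (F0 ε q) (by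
    rw [symRel, Submodule.span_le]
    rintro x ⟨v, σ, rfl⟩
    simp only [SetLike.mem_coe, LinearMap.mem_ker, map_sub, hF0_tprod]
    rw [sub_eq_zero]
    exact (Equiv.prod_comp σ fun i => iota ε (v i)).symm)

theorem hF_mk (v : Fin q → (Iε ε).Cotangent) :
    F ε q (SymPow.mk Λ _ q v) = ∏ i, iota ε (v i) := by
  exact hF0_tprod ε q v

theorem prod_mem_pow_card (x : Fin q → MvPolynomial S Λ) (h : ∀ i, x i ∈ Iε ε) :
    ∏ i, x i ∈ Iε ε ^ q := by
  have h1 : ∏ i, x i ∈ ∏ _i : Fin q, Iε ε := Ideal.prod_mem_prod fun i _ => h i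
  have h2 : (∏ _i : Fin q, Iε ε) = Iε ε ^ q := by
    simp [Finset.prod_const, Finset.card_univ]
  exact h2 ▸ h1

theorem hF_mem (x : SymPow Λ (Iε ε).Cotangent q) : F ε q x ∈ Iε ε ^ q := by
  obtain ⟨y, rfl⟩ := Submodule.Quotient.mk_surjective (symRel (Iε ε).Cotangent q) x
  have hy : y ∈ Submodule.span Λ (Set.range (PiTensorProduct.tprod Λ)) := by
    rw [PiTensorProduct.span_tprod_eq_top]; trivial
  have hle : Submodule.span Λ (Set.range (PiTensorProduct.tprod Λ))
      ≤ (Submodule.restrictScalars Λ (Iε ε ^ q)).comap (F0 ε q) := by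
    rw [Submodule.span_le]
    rintro _ ⟨v, rfl⟩
    simp only [SetLike.mem_coe, Submodule.mem_comap, hF0_tprod,
      Submodule.restrictScalars_mem]
    exact prod_mem_pow_card ε q _ fun i => hiota_mem ε (v i)
  have := hle hy
  show F0 ε q y ∈ Iε ε ^ q
  exact this

def Md : Submodule Λ (MvPolynomial S Λ) := Submodule.restrictScalars Λ (Iε ε ^ q)

def Nd : Submodule Λ (Md ε q) :=
  (Submodule.restrictScalars Λ (Iε ε ^ (q + 1))).comap (Md ε q).subtype

def G : SymPow Λ (Iε ε).Cotangent q →ₗ[Λ] (Md ε q ⧸ Nd ε q) :=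
  (Nd ε q).mkQ ∘ₗ ((F ε q).codRestrict (Md ε q) (hF_mem ε q))

theorem hG_mk (v : Fin q → (Iε ε).Cotangent) :
    G ε q (SymPow.mk Λ _ q v) = Submodule.Quotient.mk
      ⟨∏ i, iota ε (v i), prod_mem_pow_card ε q _ fun i => hiota_mem ε (v i)⟩ := by
  simp only [G, LinearMap.comp_apply, Submodule.mkQ_apply]
  exact congrArg _ (Subtype.ext (by
    show F ε q (SymPow.mk Λ _ q v) = _
    exact hF_mk ε q v))

theorem repr_support_subset {x : MvPolynomial S Λ} {k : ℕ} (hx : x ∈ Iε ε ^ k) :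
    ∀ m ∈ ((bP ε).repr x).support, k ≤ deg m := by
  have hx' : x ∈ Submodule.span Λ (bP ε '' {m | k ≤ deg m}) := by
    rw [← hspan]; exact hx
  rw [Module.Basis.mem_span_image] at hx'
  exact fun m hm => hx' hm

def alpha0 : ↥(Md ε q) →ₗ[Λ] ({m : S →₀ ℕ // deg m = q} →₀ Λ) :=
  (Finsupp.lcomapDomain _ Subtype.val_injective)
    ∘ₗ ((bP ε).repr : MvPolynomial S Λ →ₗ[Λ] ((S →₀ ℕ) →₀ Λ))
    ∘ₗ (Md ε q).subtype

theorem alpha0_apply (x : ↥(Md ε q)) (m : {m : S →₀ ℕ // deg m = q}) :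
    alpha0 ε q x m = (bP ε).repr (x : MvPolynomial S Λ) m.1 := by
  simp [alpha0, Finsupp.lcomapDomain, Finsupp.comapDomain_apply]

def alpha : (Md ε q ⧸ Nd ε q) →ₗ[Λ] ({m : S →₀ ℕ // deg m = q} →₀ Λ) :=
  Submodule.liftQ (Nd ε q) (alpha0 ε q) (by
    intro x hx
    have hx' : (x : MvPolynomial S Λ) ∈ Iε ε ^ (q + 1) := hx
    show alpha0 ε q x = 0
    ext m
    rw [alpha0_apply]
    by_contra h
    have hk := repr_support_subset ε hx' m.1 (Finsupp.mem_support_iff.mpr h)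
    have := m.2
    omega)

theorem halpha_mkB (m : S →₀ ℕ) (h : bP ε m ∈ Iε ε ^ q) :
    alpha ε q (Submodule.Quotient.mk ⟨bP ε m, h⟩)
      = if hm : deg m = q then Finsupp.single ⟨m, hm⟩ 1 else 0 := by
  classical
  rw [alpha, Submodule.liftQ_apply]
  ext m'
  rw [alpha0_apply]
  simp only [Module.Basis.repr_self]
  by_cases hq : deg m = q
  · rw [dif_pos hq]
    rw [Finsupp.single_apply, Finsupp.single_apply]
    simp [Subtype.ext_iff]
  · rw [dif_neg hq]
    have hne : m ≠ m'.1 := fun hc => hq (hc ▸ m'.2)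
    simp [Finsupp.single_apply, hne]

theorem exists_tuple (m : S →₀ ℕ) (hm : deg m = q) :
    ∃ t : Fin q → S, Multiset.map t Finset.univ.val = m.toMultiset := by
  classical
  have hlen : m.toMultiset.toList.length = q := by
    rw [Multiset.length_toList]; exact hm
  refine ⟨fun i => m.toMultiset.toList.get (Fin.cast hlen.symm i), ?_⟩
  have hcast : Multiset.map (Fin.cast hlen.symm) (Finset.univ.val : Multiset (Fin q))
      = (Finset.univ.val : Multiset (Fin m.toMultiset.toList.length)) := by
    have h := Finset.map_univ_equiv (finCongr hlen.symm)
    have h2 := congrArg Finset.val h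
    rw [Finset.map_val] at h2
    simpa using h2
  calc Multiset.map (fun i => m.toMultiset.toList.get (Fin.cast hlen.symm i)) Finset.univ.val
      = Multiset.map m.toMultiset.toList.get
          (Multiset.map (Fin.cast hlen.symm) Finset.univ.val) := by
        rw [Multiset.map_map]; rfl
    _ = Multiset.map m.toMultiset.toList.get Finset.univ.val := by rw [hcast]
    _ = ↑(List.ofFn m.toMultiset.toList.get) := by rw [Fin.univ_val_map]
    _ = ↑m.toMultiset.toList := by rw [List.ofFn_get]
    _ = m.toMultiset := Multiset.coe_toList _

/-- a chosen enumeration of a multi-index of degree `q` -/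
def tm (m : S →₀ ℕ) (hm : deg m = q) : Fin q → S := Classical.choose (exists_tuple q m hm)

theorem htm (m : S →₀ ℕ) (hm : deg m = q) :
    Multiset.map (tm q m hm) Finset.univ.val = m.toMultiset :=
  Classical.choose_spec (exists_tuple q m hm)

def msup (t : Fin q → S) : S →₀ ℕ := ∑ i, Finsupp.single (t i) 1

theorem toMultiset_msup (t : Fin q → S) :
    (msup q t).toMultiset = Multiset.map t Finset.univ.val := by
  rw [msup, Finsupp.toMultiset_sum]
  simp only [Finsupp.toMultiset_single, one_nsmul]
  rw [Finset.sum_eq_multiset_sum]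
  rw [show (Multiset.map (fun i => ({t i} : Multiset S)) Finset.univ.val)
      = Multiset.map (fun a => ({a} : Multiset S)) (Multiset.map t Finset.univ.val) from
    (Multiset.map_map _ _ _).symm]
  exact Multiset.sum_map_singleton _

theorem deg_msup (t : Fin q → S) : deg (msup q t) = q := by
  rw [deg, toMultiset_msup]
  simp

theorem prod_P_eq (t : Fin q → S) : ∏ i, P ε (t i) = bP ε (msup q t) := by
  rw [hbP_prod, msup]
  rw [← Finsupp.prod_finset_sum_index (fun a => pow_zero (P ε a))
    (fun a m n => pow_add (P ε a) m n)]
  refine Finset.prod_congr rfl fun i _ => ?_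
  rw [Finsupp.prod_single_index (h := fun a n => P ε a ^ n) (pow_zero _)]
  exact (pow_one _).symm

def Lmap : ({m : S →₀ ℕ // deg m = q} →₀ Λ) →ₗ[Λ] SymPow Λ (Iε ε).Cotangent q :=
  Finsupp.lift _ Λ _ fun m => SymPow.mk Λ _ q fun i => bC ε (tm q m.1 m.2 i)

theorem hL_single (m : {m : S →₀ ℕ // deg m = q}) :
    Lmap ε q (Finsupp.single m 1)
      = SymPow.mk Λ _ q fun i => bC ε (tm q m.1 m.2 i) := by
  simp [Lmap]

def H : (Md ε q ⧸ Nd ε q) →ₗ[Λ] SymPow Λ (Iε ε).Cotangent q := Lmap ε q ∘ₗ alpha ε q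

end Statement6Aux
end Chunk4
section Chunk5
namespace Statement6Aux

open MvPolynomial Finset

variable {Λ : Type*} [CommRing Λ] {S : Type*} (ε : MvPolynomial S Λ →ₐ[Λ] Λ) (q : ℕ)

theorem hGH : (G ε q) ∘ₗ (H ε q) = LinearMap.id := by
  apply LinearMap.ext
  intro x
  rw [LinearMap.comp_apply, LinearMap.id_apply]
  obtain ⟨y, rfl⟩ := Submodule.Quotient.mk_surjective (Nd ε q) x
  have hy : (y : MvPolynomial S Λ) ∈ Submodule.span Λ (bP ε '' {m | q ≤ deg m}) := by
    rw [← hspan]; exact y.2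
  have main : ∀ z (hz : z ∈ Submodule.span Λ (bP ε '' {m | q ≤ deg m}))
      (h : z ∈ Iε ε ^ q),
      G ε q (H ε q (Submodule.Quotient.mk ⟨z, h⟩))
        = (Submodule.Quotient.mk ⟨z, h⟩ : Md ε q ⧸ Nd ε q) := by
    intro z hz
    induction hz using Submodule.span_induction with
    | mem a ha =>
      obtain ⟨m, hm, rfl⟩ := ha
      intro h
      rw [H, LinearMap.comp_apply, halpha_mkB]
      by_cases hq : deg m = q
      · rw [dif_pos hq, hL_single, hG_mk]
        have hval : (∏ i, iota ε (bC ε (tm q m hq i))) = bP ε m := by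
          rw [Finset.prod_congr rfl fun i _ => hiota_basis ε (tm q m hq i), prod_P_eq]
          congr 1
          exact toMultiset_inj (by rw [toMultiset_msup, htm])
        exact congrArg _ (Subtype.ext hval)
      · rw [dif_neg hq, map_zero, map_zero]
        symm
        rw [Submodule.Quotient.mk_eq_zero]
        show bP ε m ∈ Iε ε ^ (q + 1)
        refine hbP_mem ε m ?_
        have hm' : q ≤ deg m := hm
        omega
    | zero =>
      intro h
      have heq : (⟨(0 : MvPolynomial S Λ), h⟩ : ↥(Md ε q)) = 0 := rfl
      rw [heq]
      simp
    | add a b ha hb iha ihb =>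
      intro h
      have haM : a ∈ Iε ε ^ q := (hspan ε q).ge ha
      have hbM : b ∈ Iε ε ^ q := (hspan ε q).ge hb
      have heq : (⟨a + b, h⟩ : ↥(Md ε q)) = ⟨a, haM⟩ + ⟨b, hbM⟩ := rfl
      rw [heq, Submodule.Quotient.mk_add, map_add, map_add, iha haM, ihb hbM]
    | smul r a ha iha =>
      intro h
      have haM : a ∈ Iε ε ^ q := (hspan ε q).ge ha
      have heq : (⟨r • a, h⟩ : ↥(Md ε q)) = r • (⟨a, haM⟩ : ↥(Md ε q)) := rfl
      rw [heq, Submodule.Quotient.mk_smul, map_smul, map_smul, iha haM]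
  have := main y.1 hy y.2
  rwa [Subtype.coe_eta] at this

theorem hHG : (H ε q) ∘ₗ (G ε q) = LinearMap.id := by
  suffices hsuf : ((H ε q ∘ₗ G ε q) ∘ₗ (symRel (Iε ε).Cotangent q).mkQ)
      = (symRel (Iε ε).Cotangent q).mkQ by
    apply LinearMap.ext
    intro x
    obtain ⟨y, rfl⟩ := Submodule.Quotient.mk_surjective (symRel (Iε ε).Cotangent q) x
    have h2 := DFunLike.congr_fun hsuf y
    exact h2
  apply PiTensorProduct.ext
  apply Module.Basis.ext_multilinear (fun _ => bC ε)
  intro v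
  simp only [LinearMap.compMultilinearMap_apply, LinearMap.comp_apply, Submodule.mkQ_apply]
  show H ε q (G ε q (SymPow.mk Λ _ q fun i => bC ε (v i)))
      = SymPow.mk Λ _ q fun i => bC ε (v i)
  rw [hG_mk]
  have hval : (∏ i, iota ε (bC ε (v i))) = bP ε (msup q v) := by
    rw [Finset.prod_congr rfl fun i _ => hiota_basis ε (v i), prod_P_eq]
  have hmem' : bP ε (msup q v) ∈ Iε ε ^ q := hbP_mem ε _ (le_of_eq (deg_msup q v).symm)
  rw [show (⟨∏ i, iota ε (bC ε (v i)),
        prod_mem_pow_card ε q _ fun i => hiota_mem ε _⟩ : ↥(Md ε q))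
      = ⟨bP ε (msup q v), hmem'⟩ from Subtype.ext hval]
  rw [H, LinearMap.comp_apply, halpha_mkB, dif_pos (deg_msup q v), hL_single]
  obtain ⟨σ, hσ⟩ := exists_comp_perm (tm q (msup q v) (deg_msup q v)) v (by
    rw [htm, toMultiset_msup])
  rw [show (fun i => bC ε (tm q (msup q v) (deg_msup q v) i)) = (fun i => bC ε (v i)) ∘ σ from by
    funext i
    simp only [Function.comp_apply]
    rw [congrFun hσ i]
    rfl]
  exact mk_comp_perm _ σ

/-- the equivalence -/
def eqv : SymPow Λ (Iε ε).Cotangent q ≃ₗ[Λ] (Md ε q ⧸ Nd ε q) :=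
  LinearEquiv.ofLinear (G ε q) (H ε q) (hGH ε q) (hHG ε q)

theorem final (v : Fin q → ↥(Iε ε)) :
    eqv ε q (SymPow.mk Λ (Iε ε).Cotangent q fun i => (Iε ε).toCotangent (v i))
      = (Submodule.Quotient.mk
          ⟨∏ i, (v i : MvPolynomial S Λ),
            prod_mem_pow_card ε q _ fun i => (v i).2⟩ : Md ε q ⧸ Nd ε q) := by
  rw [eqv, LinearEquiv.ofLinear_apply, hG_mk]
  refine (Submodule.Quotient.eq _).mpr ?_
  have key : (∏ i, iota ε ((Iε ε).toCotangent (v i))) - ∏ i, (v i : MvPolynomial S Λ)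
      ∈ Iε ε ^ (q + 1) := by
    have h := prod_sub_prod_mem (Iε ε) Finset.univ
      (fun i => iota ε ((Iε ε).toCotangent (v i)))
      (fun i => (v i : MvPolynomial S Λ))
      (fun i _ => hiota_mem ε _) (fun i _ => (v i).2)
      (fun i _ => by
        have h2 := (Iε ε ^ 2).neg_mem (hiota_sub ε (v i))
        rwa [neg_sub] at h2)
    simpa using h
  exact key

end Statement6Aux
end Chunk5
/-- let `Λ` be a commutative ring, `A = Λ[X_s : s ∈ S]` a polynomial
`Λ`-algebra, `ε : A → Λ` a `Λ`-algebra homomorphism and `I = ker ε`.  Then for every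
`q ≥ 0` the canonical `Λ`-module homomorphism `Sym^q_Λ(I/I²) → I^q/I^{q+1}` induced by
multiplication in `A` (i.e. sending the symmetric product of the classes of
`v 0, …, v (q-1) ∈ I` to the class of `∏ i, v i`) is an isomorphism. -/
theorem statement_6 (Λ : Type*) [CommRing Λ] (S : Type*)
    (ε : MvPolynomial S Λ →ₐ[Λ] Λ) (q : ℕ) :
    let I : Ideal (MvPolynomial S Λ) := RingHom.ker (ε : MvPolynomial S Λ →+* Λ)
    let M := Submodule.restrictScalars Λ (I ^ q)
    let N : Submodule Λ M := (Submodule.restrictScalars Λ (I ^ (q + 1))).comap M.subtype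
    ∃ e : SymPow Λ I.Cotangent q ≃ₗ[Λ] (M ⧸ N),
      ∀ v : Fin q → I,
        e (SymPow.mk Λ I.Cotangent q fun i => I.toCotangent (v i)) =
          Submodule.Quotient.mk ⟨∏ i, (v i : MvPolynomial S Λ), show _ ∈ I ^ q by
            have h1 : ∏ i, (v i : MvPolynomial S Λ) ∈ ∏ _i : Fin q, I :=
              Ideal.prod_mem_prod (fun i _ => (v i).2)
            have h2 : (∏ _i : Fin q, I) = I ^ q := by
              simp [Finset.prod_const, Finset.card_univ]
            exact h2 ▸ h1⟩ := by
  intro I M N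
  exact ⟨Statement6Aux.eqv ε q, fun v => Statement6Aux.final ε q v⟩
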